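/- arXiv:2512.22907 — 4 statements merged into one kernel-verified Lean document; each statement's English description precedes it below -/
import Mathlib

section
/- Let X ⊆ S^{d-1} (the Euclidean unit sphere in ℝ^d) with pos X = ℝ^d. If there is no subset Y ⊆ X with |Y| ≤ 2d−1 and pos Y = ℝ^d, then X = {±e₁, …, ±e_d} for some basis e₁, …, e_d of ℝ^d. -/
open scoped BigOperators

/-- The positive (conic) hull of a set: all finite nonnegative linear combinations. -/
def posHull {d : ℕ} (A : Set (EuclideanSpace ℝ (Fin d))) : Set (EuclideanSpace ℝ (Fin d)) :=
  {x | ∃ (n : ℕ) (c : Fin n → ℝ) (f : Fin n → EuclideanSpace ℝ (Fin d)),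
    (∀ i, 0 ≤ c i) ∧ (∀ i, f i ∈ A) ∧ x = ∑ i, c i • f i}

/-!
Pick a basis `b ⊆ X`. By the conic Carathéodory theorem, `-∑ bᵢ` is a positive combination of a
linearly independent family `y ⊆ X`; then `b ∪ y` spans and carries a positive dependence, so it
positively spans, and the hypothesis forces `y` to have `d` elements. For the same reason no
nonnegative dependence on a family of at most `2d` vectors of `X` with spanning support can have a
vanishing weight. Shifting the positive dependence of `b ∪ y` along the relation expressing one
vector of either basis in the other shows that each basis has nonpositive coordinates in the other;
two bases related by mutually nonnegative coordinate matrices agree up to order and positive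
scaling, so `y` is `-b` up to order, and unit length gives `-b ⊆ X`. Finally, a vector of `X` with
two nonzero coordinates in `±b` could replace one basis vector and free another, leaving a
positively spanning family of `2d - 1` vectors.
-/

open Module Set

section Dependence

variable {E : Type*} [AddCommGroup E] [Module ℝ E]

theorem exists_nonneg_sum_smul_eq_with_zero {ι : Type*} [Fintype ι] {v : ι → E} {w g : ι → ℝ}
    (hw : 0 ≤ w) (hg : ∑ i, g i • v i = 0) (hpos : ∃ i, 0 < g i) :
    ∃ w' : ι → ℝ, 0 ≤ w' ∧ (∃ i, w' i = 0) ∧ (∀ i, g i ≤ 0 → w i ≤ w' i) ∧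
      ∑ i, w' i • v i = ∑ i, w i • v i := by
  classical
  obtain ⟨i₀, hi₀, hmin⟩ := Finset.exists_min_image {i | 0 < g i} (fun i => w i / g i)
    (by obtain ⟨i, hi⟩ := hpos; exact ⟨i, by simpa using hi⟩)
  rw [Finset.mem_filter_univ] at hi₀
  set t := w i₀ / g i₀
  have ht : 0 ≤ t := div_nonneg (hw i₀) hi₀.le
  refine ⟨w - t • g, fun i => ?_, ⟨i₀, ?_⟩, fun i hi => ?_, ?_⟩
  · rcases le_or_gt (g i) 0 with h | h
    · have hwi : 0 ≤ w i := hw i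
      simp only [Pi.zero_apply, Pi.sub_apply, Pi.smul_apply, smul_eq_mul]
      nlinarith
    · have := hmin i (by simpa using h)
      rw [le_div_iff₀ h] at this
      simp only [Pi.zero_apply, Pi.sub_apply, Pi.smul_apply, smul_eq_mul]
      linarith
  · simp [t, hi₀.ne']
  · simp only [Pi.sub_apply, Pi.smul_apply, smul_eq_mul]
    nlinarith
  · simp [sub_smul, mul_smul, Finset.sum_sub_distrib, ← Finset.smul_sum, hg]

theorem exists_linearIndependent_pos_sum_smul_eq :
    ∀ {n : ℕ} (c : Fin n → ℝ) (f : Fin n → E), 0 ≤ c →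
    ∃ (m : ℕ) (c' : Fin m → ℝ) (f' : Fin m → E), (∀ i, 0 < c' i) ∧
      range f' ⊆ range f ∧ LinearIndependent ℝ f' ∧ ∑ i, c' i • f' i = ∑ i, c i • f i
  | 0, _, _, _ => ⟨0, ![], ![], finZeroElim, by simp, linearIndependent_empty_type, by simp⟩
  | n + 1, c, f, hc => by
    by_cases h : (∀ i, 0 < c i) ∧ LinearIndependent ℝ f
    · exact ⟨n + 1, c, f, h.1, subset_rfl, h.2, rfl⟩
    obtain ⟨c', hc', ⟨i₀, hi₀⟩, hsum⟩ : ∃ c' : Fin (n + 1) → ℝ, 0 ≤ c' ∧ (∃ i, c' i = 0) ∧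
        ∑ i, c' i • f i = ∑ i, c i • f i := by
      by_cases hpos : ∀ i, 0 < c i
      · obtain ⟨g, hg, hgpos⟩ : ∃ g : Fin (n + 1) → ℝ, ∑ i, g i • f i = 0 ∧ ∃ i, 0 < g i := by
          obtain ⟨g, hg, i, hi⟩ := Fintype.not_linearIndependent_iff.mp fun hli => h ⟨hpos, hli⟩
          rcases hi.lt_or_gt with hi | hi
          · exact ⟨-g, by simp [neg_smul, hg], i, by simpa using hi⟩
          · exact ⟨g, hg, i, hi⟩
        obtain ⟨c', hc', hzero, -, hsum⟩ := exists_nonneg_sum_smul_eq_with_zero hc hg hgpos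
        exact ⟨c', hc', hzero, hsum⟩
      · obtain ⟨i, hi⟩ := not_forall.mp hpos
        exact ⟨c, hc, ⟨i, le_antisymm (not_lt.mp hi) (hc i)⟩, rfl⟩
    obtain ⟨m, c'', f', hpos, hrange, hli, hsum'⟩ :=
      exists_linearIndependent_pos_sum_smul_eq (c' ∘ i₀.succAbove) (f ∘ i₀.succAbove)
        fun i => hc' _
    refine ⟨m, c'', f', hpos, hrange.trans (range_comp_subset_range _ _), hli, ?_⟩
    rw [hsum', ← hsum, Fin.sum_univ_succAbove _ i₀, hi₀, zero_smul, zero_add]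
    rfl

end Dependence

theorem Module.Basis.exists_eq_smul_of_repr_nonneg {𝕜 V ι κ : Type*} [Field 𝕜] [LinearOrder 𝕜]
    [IsStrictOrderedRing 𝕜] [AddCommGroup V] [Module 𝕜 V] [Fintype ι] [Fintype κ]
    (b : Basis ι 𝕜 V) (y : Basis κ 𝕜 V) (hb : ∀ j i, 0 ≤ b.repr (y j) i)
    (hy : ∀ i j, 0 ≤ y.repr (b i) j) (j : κ) :
    ∃ i, ∃ c : 𝕜, 0 < c ∧ b i = c • y j := by
  classical
  obtain ⟨i, hi⟩ : ∃ i, b.repr (y j) i ≠ 0 := by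
    by_contra! h
    exact y.ne_zero j (b.repr.injective (by ext i; simp [h]))
  have hzero : ∀ k ≠ j, y.repr (b i) k = 0 := by
    intro k hk
    have hsum : ∑ i', b.repr (y j) i' * y.repr (b i') k = 0 := by
      have := congrArg (fun v => y.repr v k) (b.sum_repr (y j))
      simp only [map_sum, map_smul, Finsupp.coe_finsetSum, Finset.sum_apply, Finsupp.smul_apply,
        smul_eq_mul, Basis.repr_self, Finsupp.single_apply, if_neg hk.symm] at this
      exact this
    have := (Finset.sum_eq_zero_iff_of_nonneg fun i' _ => mul_nonneg (hb j i') (hy i' k)).mp hsum i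
      (Finset.mem_univ _)
    exact (mul_eq_zero.mp this).resolve_left hi
  have hbi : b i = y.repr (b i) j • y j := by
    conv_lhs => rw [← y.sum_repr (b i)]
    exact Finset.sum_eq_single j (fun k _ hk => by rw [hzero k hk, zero_smul]) (by simp)
  refine ⟨i, _, lt_of_le_of_ne (hy i j) fun h => b.ne_zero i ?_, hbi⟩
  rw [hbi, ← h, zero_smul]
theorem Module.Basis.exists_basis_mem_of_span_eq_top {K V ι : Type*} [DivisionRing K]
    [AddCommGroup V] [Module K V] (b : Basis ι K V) {s : Set V}
    (hs : Submodule.span K s = ⊤) : ∃ b' : Basis ι K V, ∀ i, b' i ∈ s := by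
  let b₀ := Basis.ofSpan hs.ge
  exact ⟨b₀.reindex (b₀.indexEquiv b), fun i =>
    Basis.ofSpan_subset _ (Basis.range_reindex b₀ _ ▸ mem_range_self i)⟩

section PosHull

variable {d : ℕ}

theorem sum_smul_mem_posHull {A : Set (EuclideanSpace ℝ (Fin d))} {ι : Type*} [Fintype ι]
    {c : ι → ℝ} {f : ι → EuclideanSpace ℝ (Fin d)} (hc : 0 ≤ c) (hf : ∀ i, f i ∈ A) :
    ∑ i, c i • f i ∈ posHull A := by
  let e := Fintype.equivFin ι
  refine ⟨Fintype.card ι, c ∘ e.symm, f ∘ e.symm, fun i => hc _, fun i => hf _, ?_⟩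
  exact (e.symm.sum_comp fun i => c i • f i).symm

theorem span_eq_top_of_posHull_eq_univ {A : Set (EuclideanSpace ℝ (Fin d))}
    (hA : posHull A = univ) : Submodule.span ℝ A = ⊤ := by
  refine eq_top_iff.2 fun x _ => ?_
  obtain ⟨n, c, f, -, hf, rfl⟩ : x ∈ posHull A := hA ▸ mem_univ x
  exact Submodule.sum_mem _ fun i _ => Submodule.smul_mem _ _ (Submodule.subset_span (hf i))

theorem exists_linearIndependent_of_mem_posHull {A : Set (EuclideanSpace ℝ (Fin d))}
    {x : EuclideanSpace ℝ (Fin d)} (hx : x ∈ posHull A) :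
    ∃ (m : ℕ) (c : Fin m → ℝ) (f : Fin m → EuclideanSpace ℝ (Fin d)), (∀ i, 0 < c i) ∧
      (∀ i, f i ∈ A) ∧ LinearIndependent ℝ f ∧ x = ∑ i, c i • f i := by
  obtain ⟨n, c, f, hc, hf, rfl⟩ := hx
  obtain ⟨m, c', f', hc', hrange, hli, hsum⟩ := exists_linearIndependent_pos_sum_smul_eq c f hc
  exact ⟨m, c', f', hc', fun i => range_subset_iff.1 (hrange.trans (range_subset_iff.2 hf)) i,
    hli, hsum.symm⟩

theorem posHull_range_eq_univ_of_pos_dependence {ι : Type*} [Fintype ι]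
    {v : ι → EuclideanSpace ℝ (Fin d)} {w : ι → ℝ} (hw : ∀ i, 0 < w i) (hdep : ∑ i, w i • v i = 0)
    (hspan : Submodule.span ℝ (range v) = ⊤) : posHull (range v) = univ := by
  refine eq_univ_of_forall fun x => ?_
  obtain ⟨c, hc⟩ :=
    (Submodule.mem_span_range_iff_exists_fun ℝ).mp (hspan ▸ Submodule.mem_top (x := x))
  -- shifting the coefficients of `x` along `w` by `M` makes them nonnegative
  set M := ∑ i, |c i| / w i
  have hshift : ∀ i, 0 ≤ c i + M * w i := by
    intro i
    have hle : |c i| / w i ≤ M :=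
      Finset.single_le_sum (fun j _ => div_nonneg (abs_nonneg (c j)) (hw j).le) (Finset.mem_univ i)
    rw [div_le_iff₀ (hw i)] at hle
    linarith [neg_abs_le (c i)]
  have hx : x = ∑ i, (c i + M * w i) • v i := by
    simp only [add_smul, mul_smul, Finset.sum_add_distrib, hc, ← Finset.smul_sum, hdep, smul_zero,
      add_zero]
  exact hx ▸ sum_smul_mem_posHull hshift fun i => mem_range_self i

end PosHull

section NoSmallPositiveBasis

variable {d : ℕ} {X : Set (EuclideanSpace ℝ (Fin d))}

theorem two_mul_le_card_of_pos_dependence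
    (hno : ¬ ∃ Y ⊆ X, Y.Finite ∧ Y.ncard ≤ 2 * d - 1 ∧ posHull Y = Set.univ)
    {ι : Type*} [Fintype ι] {v : ι → EuclideanSpace ℝ (Fin d)} (hv : ∀ i, v i ∈ X) {w : ι → ℝ}
    (hw : ∀ i, 0 < w i) (hdep : ∑ i, w i • v i = 0) (hspan : Submodule.span ℝ (range v) = ⊤) :
    2 * d ≤ Fintype.card ι := by
  have hcard : (range v).ncard ≤ Fintype.card ι := by
    rw [← image_univ, ← Nat.card_eq_fintype_card, ← ncard_univ]
    exact ncard_image_le finite_univ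
  by_contra h
  exact hno ⟨range v, range_subset_iff.2 hv, finite_range v, by omega,
    posHull_range_eq_univ_of_pos_dependence hw hdep hspan⟩

theorem pos_of_nonneg_dependence
    (hno : ¬ ∃ Y ⊆ X, Y.Finite ∧ Y.ncard ≤ 2 * d - 1 ∧ posHull Y = Set.univ)
    {ι : Type*} [Fintype ι] (hcard : Fintype.card ι ≤ 2 * d) {v : ι → EuclideanSpace ℝ (Fin d)}
    (hv : ∀ i, v i ∈ X) {w : ι → ℝ} (hw : 0 ≤ w) (hdep : ∑ i, w i • v i = 0)
    (hspan : Submodule.span ℝ (v '' {i | 0 < w i}) = ⊤) (i : ι) : 0 < w i := by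
  classical
  by_contra hi
  have hsum : ∑ j : {j // 0 < w j}, w j • v j = 0 := by
    rw [← hdep, ← Fintype.sum_subtype_add_sum_subtype (fun j => 0 < w j), left_eq_add]
    exact Finset.sum_eq_zero fun j _ => by
      rw [le_antisymm (not_lt.mp j.2) (hw j), zero_smul]
  have hle := two_mul_le_card_of_pos_dependence hno (v := fun j : {j // 0 < w j} => v j)
    (fun j => hv j) (w := fun j => w j) (fun j => j.2) hsum
    (by rw [image_eq_range] at hspan; exact hspan)
  have hlt := Fintype.card_subtype_lt (p := fun j => 0 < w j) hi
  omega

theorem repr_nonpos_of_pos_dependence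
    (hno : ¬ ∃ Y ⊆ X, Y.Finite ∧ Y.ncard ≤ 2 * d - 1 ∧ posHull Y = Set.univ)
    {ι κ : Type*} [Fintype ι] [Fintype κ] (p : Basis ι ℝ (EuclideanSpace ℝ (Fin d)))
    (q : Basis κ ℝ (EuclideanSpace ℝ (Fin d))) (hp : ∀ i, p i ∈ X) (hq : ∀ j, q j ∈ X)
    {α : ι → ℝ} {β : κ → ℝ} (hα : ∀ i, 0 < α i) (hβ : ∀ j, 0 < β j)
    (hdep : ∑ i, α i • p i + ∑ j, β j • q j = 0) (j : κ) (i : ι) : p.repr (q j) i ≤ 0 := by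
  classical
  by_contra! h
  have hcard : Fintype.card (ι ⊕ κ) ≤ 2 * d := by
    rw [Fintype.card_sum, ← finrank_eq_card_basis p, ← finrank_eq_card_basis q,
      finrank_euclideanSpace_fin]
    omega
  obtain ⟨w, hw, ⟨k, hk⟩, hle, hsum⟩ := exists_nonneg_sum_smul_eq_with_zero
    (v := Sum.elim p q) (w := Sum.elim α β) (g := Sum.elim (p.repr (q j)) (-Pi.single j 1))
    (by rintro (i | j) <;> simp [(hα _).le, (hβ _).le])
    (by simp [Fintype.sum_sum_type, p.sum_repr]) ⟨Sum.inl i, h⟩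
  have hspan : Submodule.span ℝ (Sum.elim p q '' {k | 0 < w k}) = ⊤ := by
    refine eq_top_iff.2 (q.span_eq ▸ Submodule.span_mono ?_)
    rintro _ ⟨j', rfl⟩
    refine ⟨Sum.inr j', (hβ j').trans_le (hle (Sum.inr j') ?_), rfl⟩
    simp only [Sum.elim_inr, Pi.neg_apply, Pi.single_apply]
    split_ifs <;> norm_num
  refine (pos_of_nonneg_dependence hno hcard (by rintro (i | j) <;> simp [hp, hq]) hw ?_ hspan
    k).ne' hk
  rw [hsum, Fintype.sum_sum_type]
  simpa using hdep

theorem exists_basis_mem_and_neg_mem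
    (hXs : X ⊆ Metric.sphere (0 : EuclideanSpace ℝ (Fin d)) 1) (hX : posHull X = Set.univ)
    (hno : ¬ ∃ Y ⊆ X, Y.Finite ∧ Y.ncard ≤ 2 * d - 1 ∧ posHull Y = Set.univ) :
    ∃ b : Basis (Fin d) ℝ (EuclideanSpace ℝ (Fin d)), ∀ i, b i ∈ X ∧ -b i ∈ X := by
  obtain ⟨b, hbX⟩ := (EuclideanSpace.basisFun (Fin d) ℝ).toBasis.exists_basis_mem_of_span_eq_top
    (span_eq_top_of_posHull_eq_univ hX)
  obtain ⟨m, μ, y, hμ, hyX, hyli, hy⟩ :=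
    exists_linearIndependent_of_mem_posHull (hX ▸ mem_univ (-∑ i, b i))
  have hdep : ∑ i, b i + ∑ j, μ j • y j = 0 := by rw [← hy, add_neg_cancel]
  have hm : Fintype.card (Fin m) = finrank ℝ (EuclideanSpace ℝ (Fin d)) := by
    refine le_antisymm hyli.fintype_card_le_finrank ?_
    have := two_mul_le_card_of_pos_dependence hno (v := Sum.elim b y)
      (by rintro (i | j) <;> simp [hbX, hyX]) (w := Sum.elim 1 μ) (by rintro (i | j) <;> simp [hμ])
      (by simpa [Fintype.sum_sum_type] using hdep)
      (eq_top_iff.2 (b.span_eq ▸ Submodule.span_mono (range_subset_iff.2 fun i =>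
        ⟨Sum.inl i, rfl⟩)))
    simp only [Fintype.card_sum, Fintype.card_fin] at this
    simp only [Fintype.card_fin, finrank_euclideanSpace_fin]
    omega
  let c := basisOfLinearIndependentOfCardEqFinrank' y hyli hm
  have hcX : ∀ j, c j ∈ X := by simpa [c] using hyX
  have hbc := repr_nonpos_of_pos_dependence hno b c hbX hcX (fun _ => one_pos) hμ (by simpa [c])
  have hcb := repr_nonpos_of_pos_dependence hno c b hcX hbX hμ (fun _ => one_pos)
    (by rw [add_comm]; simpa [c])
  refine ⟨b, fun i => ⟨hbX i, ?_⟩⟩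
  obtain ⟨j, r, hr, hcj⟩ := c.exists_eq_smul_of_repr_nonneg (b.unitsSMul fun _ => -1)
    (fun i j => by simpa [Basis.unitsSMul_apply, Units.smul_def] using hcb i j)
    (fun j i => by simpa [Basis.repr_unitsSMul] using hbc j i) i
  simp only [Basis.unitsSMul_apply, Units.smul_def, Units.val_neg, Units.val_one, neg_smul,
    one_smul] at hcj
  have hnorm : ‖c j‖ = ‖-b i‖ := by
    rw [norm_neg, mem_sphere_zero_iff_norm.1 (hXs (hcX j)),
      mem_sphere_zero_iff_norm.1 (hXs (hbX i))]
  rw [← hcj.trans ((SameRay.sameRay_pos_smul_left _ hr).eq_of_norm_eq (hcj ▸ hnorm))]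
  exact hcX j

theorem repr_eq_zero_of_repr_ne_zero
    (hno : ¬ ∃ Y ⊆ X, Y.Finite ∧ Y.ncard ≤ 2 * d - 1 ∧ posHull Y = Set.univ)
    {ι : Type*} [Fintype ι] (b : Basis ι ℝ (EuclideanSpace ℝ (Fin d)))
    (hb : ∀ i, b i ∈ X ∧ -b i ∈ X) {x : EuclideanSpace ℝ (Fin d)} (hx : x ∈ X)
    (hxb : ∀ i, 0 ≤ b.repr x i) {i i' : ι} (hi : b.repr x i ≠ 0) (hi' : i' ≠ i) :
    b.repr x i' = 0 := by
  classical
  by_contra h'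
  have hcard : Fintype.card (ι ⊕ ι) ≤ 2 * d := by
    rw [Fintype.card_sum, ← finrank_eq_card_basis b, finrank_euclideanSpace_fin]
    omega
  have hpos : ∀ k, 0 < b.repr x k + if k = i ∨ k = i' then 0 else 1 := by
    intro k
    split_ifs with hk
    · rcases hk with rfl | rfl
      exacts [by simpa using (hxb k).lt_of_ne' hi, by simpa using (hxb k).lt_of_ne' h']
    · linarith [hxb k]
  -- `x` takes the place of `b i`, and `b i'` is dropped
  have := pos_of_nonneg_dependence hno hcard
    (v := Sum.elim (fun k => -b k) fun k => if k = i then x else b k)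
    (w := Sum.elim (fun k => b.repr x k + if k = i ∨ k = i' then 0 else 1)
      fun k => if k = i' then 0 else 1) ?_ ?_ ?_ ?_ (Sum.inr i')
  · simp at this
  · rintro (k | k)
    · exact (hb k).2
    · simp only [Sum.elim_inr]
      split_ifs
      exacts [hx, (hb k).1]
  · rintro (k | k)
    · exact (hpos k).le
    · simp only [Sum.elim_inr, Pi.zero_apply]
      split_ifs <;> norm_num
  · rw [Fintype.sum_sum_type, ← Finset.sum_add_distrib]
    have hterm : ∀ k, (b.repr x k + if k = i ∨ k = i' then 0 else 1) • -b k +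
        (if k = i' then (0 : ℝ) else 1) • (if k = i then x else b k) =
        (if k = i then x else 0) - b.repr x k • b k := by
      intro k
      rcases eq_or_ne k i with rfl | hki
      · simp only [hi'.symm, or_false, ↓reduceIte, add_zero, smul_neg, one_smul]
        abel
      rcases eq_or_ne k i' with rfl | hki'
      · simp [hki]
      · simp only [hki, hki', or_self, ↓reduceIte, smul_neg, one_smul, zero_sub]
        module
    simp only [Sum.elim_inl, Sum.elim_inr, hterm, Finset.sum_sub_distrib, Finset.sum_ite_eq',
      Finset.mem_univ, if_true, b.sum_repr, sub_self]
  · refine eq_top_iff.2 ((b.unitsSMul fun _ => -1).span_eq ▸ Submodule.span_mono ?_)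
    rintro _ ⟨k, rfl⟩
    exact ⟨Sum.inl k, hpos k, by simp [Basis.unitsSMul_apply, Units.smul_def]⟩

theorem mem_range_union_neg_range
    (hXs : X ⊆ Metric.sphere (0 : EuclideanSpace ℝ (Fin d)) 1)
    (hno : ¬ ∃ Y ⊆ X, Y.Finite ∧ Y.ncard ≤ 2 * d - 1 ∧ posHull Y = Set.univ)
    {ι : Type*} [Fintype ι] (b : Basis ι ℝ (EuclideanSpace ℝ (Fin d)))
    (hb : ∀ i, b i ∈ X ∧ -b i ∈ X) {x : EuclideanSpace ℝ (Fin d)} (hx : x ∈ X) :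
    x ∈ range b ∪ -range b := by
  classical
  let s : ι → ℝˣ := fun k => if 0 ≤ b.repr x k then 1 else -1
  let b' := b.unitsSMul s
  have hb' : ∀ k, b' k = b k ∨ b' k = -b k := by
    intro k
    by_cases hk : 0 ≤ b.repr x k <;> simp [b', s, Basis.unitsSMul_apply, Units.smul_def, hk]
  have hb'X : ∀ k, b' k ∈ X ∧ -b' k ∈ X := by
    intro k
    rcases hb' k with h | h <;> rw [h]
    exacts [hb k, by simpa using (hb k).symm]
  have hxb' : ∀ k, 0 ≤ b'.repr x k := by
    intro k
    rcases le_or_gt 0 (b.repr x k) with hk | hk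
    · simp [b', s, Basis.repr_unitsSMul, hk]
    · simpa [b', s, Basis.repr_unitsSMul, hk.not_ge] using hk.le
  have hnorm : ∀ y ∈ X, ‖y‖ = 1 := fun y hy => mem_sphere_zero_iff_norm.1 (hXs hy)
  obtain ⟨k, hk⟩ : ∃ k, b'.repr x k ≠ 0 := by
    by_contra! h
    have hx0 : x = 0 := b'.repr.injective (by ext k; simp [h])
    simpa [hx0] using hnorm x hx
  have hxk : x = b'.repr x k • b' k := by
    conv_lhs => rw [← b'.sum_repr x]
    refine Finset.sum_eq_single k (fun i' _ hi' => ?_) (by simp)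
    rw [repr_eq_zero_of_repr_ne_zero hno b' hb'X hx hxb' hk hi', zero_smul]
  have hxk' : x = b' k := hxk.trans <|
    (SameRay.sameRay_pos_smul_left _ ((hxb' k).lt_of_ne' hk)).eq_of_norm_eq
      (by rw [← hxk, hnorm x hx, hnorm _ (hb'X k).1])
  rcases hb' k with h | h
  · exact Or.inl ⟨k, (hxk'.trans h).symm⟩
  · exact Or.inr ⟨k, by rw [hxk', h, neg_neg]⟩

end NoSmallPositiveBasis

theorem steinitz_equality_case (d : ℕ) (X : Set (EuclideanSpace ℝ (Fin d)))
    (hXs : X ⊆ Metric.sphere (0 : EuclideanSpace ℝ (Fin d)) 1)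
    (hX : posHull X = Set.univ)
    (hno : ¬ ∃ Y ⊆ X, Y.Finite ∧ Y.ncard ≤ 2 * d - 1 ∧ posHull Y = Set.univ) :
    ∃ e : Fin d → EuclideanSpace ℝ (Fin d),
      LinearIndependent ℝ e ∧ Submodule.span ℝ (Set.range e) = ⊤ ∧
      X = Set.range e ∪ (-(Set.range e)) := by
  obtain ⟨b, hb⟩ := exists_basis_mem_and_neg_mem hXs hX hno
  refine ⟨b, b.linearIndependent, b.span_eq, subset_antisymm
    (fun x hx => mem_range_union_neg_range hXs hno b hb hx) (union_subset ?_ ?_)⟩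
  · exact range_subset_iff.2 fun i => (hb i).1
  · rintro x ⟨i, hi⟩
    rw [← neg_neg x, ← hi]
    exact (hb i).2
end

section
/- Let A₁, …, A_d ⊆ ℝ^d and suppose a nonzero vector v lies in pos A_i for each i ∈ {1,…,d}. Then there exist points x_i ∈ A_i (i = 1,…,d) such that v ∈ pos {x₁, …, x_d}. -/
open scoped BigOperators

/-!
Bárány's distance argument. Among all choices of one point per colour, together with a linearly
independent subfamily of the chosen points, take one whose cone comes closest to `v`; restricting
to independent subfamilies keeps these cones simplicial, hence closed, so the nearest point `z`
exists. If `z ≠ v`, put `u = v - z`. The generators carrying `z` are orthogonal to `u` and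
independent, so there are fewer than `dim E` of them and some colour `i₀` is unused. As
`⟪u, v⟫ = ‖u‖² > 0` and `v ∈ pos Aᵢ₀`, some `a ∈ Aᵢ₀` has `⟪u, a⟫ > 0`. Choosing `a` for colour `i₀`
and adding it to the subfamily gives a cone containing `z` and `a`, in which `z` is no longer
nearest to `v` since `⟪v - z, a - z⟫ > 0`.
-/

open Set Metric Module PointedCone
open scoped RealInnerProductSpace

section Face

variable {𝕜 M : Type*} [Field 𝕜] [LinearOrder 𝕜] [IsStrictOrderedRing 𝕜] [AddCommGroup M]
  [Module 𝕜 M] {s : Set M} {φ : M →ₗ[𝕜] 𝕜} {z : M}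

theorem PointedCone.map_nonpos_of_mem_hull (hs : ∀ y ∈ s, φ y ≤ 0) (hz : z ∈ hull 𝕜 s) :
    φ z ≤ 0 := by
  induction hz using Submodule.span_induction with
  | mem y hy => exact hs y hy
  | zero => simp
  | add y w _ _ hy hw => rw [map_add]; exact add_nonpos hy hw
  | smul r y _ hy =>
    rw [φ.map_smul_of_tower, Nonneg.mk_smul]
    exact mul_nonpos_of_nonneg_of_nonpos r.2 hy

theorem PointedCone.mem_hull_inter_ker_of_nonpos (hs : ∀ y ∈ s, φ y ≤ 0) (hz : z ∈ hull 𝕜 s)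
    (hφz : φ z = 0) : z ∈ hull 𝕜 (s ∩ LinearMap.ker φ) := by
  induction hz using Submodule.span_induction with
  | mem y hy => exact subset_hull ⟨hy, hφz⟩
  | zero => exact zero_mem _
  | add y w hy hw ihy ihw =>
    have hy' := map_nonpos_of_mem_hull hs hy
    have hw' := map_nonpos_of_mem_hull hs hw
    rw [map_add] at hφz
    exact add_mem (ihy (by linarith)) (ihw (by linarith))
  | smul r y _ ihy =>
    rw [φ.map_smul_of_tower, Nonneg.mk_smul, smul_eq_mul, mul_eq_zero] at hφz
    obtain hr | hy := hφz
    · rw [show r = 0 from Subtype.ext hr, zero_smul]; exact zero_mem _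
    · exact Submodule.smul_mem _ r (ihy hy)

end Face

section Closed

variable {E : Type*} [NormedAddCommGroup E] [NormedSpace ℝ E]

theorem PointedCone.hull_range_eq_image_nonneg {κ : Type*} [Fintype κ] (g : κ → E) :
    (hull ℝ (range g) : Set E) = Fintype.linearCombination ℝ g '' Ici 0 := by
  ext y
  simp only [SetLike.mem_coe, Submodule.mem_span_range_iff_exists_fun, mem_image, mem_Ici,
    Fintype.linearCombination_apply]
  constructor
  · rintro ⟨c, rfl⟩
    exact ⟨fun i => c i, fun i => (c i).2, rfl⟩
  · rintro ⟨c, hc, rfl⟩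
    exact ⟨fun i => ⟨c i, hc i⟩, rfl⟩

theorem PointedCone.isClosed_hull_range [FiniteDimensional ℝ E] {κ : Type*} [Finite κ] {g : κ → E}
    (hg : LinearIndependent ℝ g) : IsClosed (hull ℝ (range g) : Set E) := by
  have := Fintype.ofFinite κ
  rw [hull_range_eq_image_nonneg]
  refine (LinearMap.isClosedEmbedding_of_injective ?_).isClosedMap _ isClosed_Ici
  exact LinearMap.ker_eq_bot.mpr hg.fintypeLinearCombination_injective

end Closed

section Nearest

variable {E : Type*} [NormedAddCommGroup E] [InnerProductSpace ℝ E] {K : Set E} {v z : E}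

theorem infDist_eq_dist_iff_real_inner_le_zero (hK : Convex ℝ K) (hz : z ∈ K) :
    infDist v K = dist v z ↔ ∀ w ∈ K, ⟪v - z, w - z⟫ ≤ 0 := by
  simp only [infDist_eq_iInf, dist_eq_norm, eq_comm (b := ‖v - z‖)]
  exact norm_eq_iInf_iff_real_inner_le_zero hK hz

theorem PointedCone.inner_eq_zero_and_le_zero_of_infDist_eq {C : PointedCone ℝ E} (hz : z ∈ C)
    (h : infDist v C = dist v z) : ⟪v - z, z⟫ = 0 ∧ ∀ w ∈ C, ⟪v - z, w⟫ ≤ 0 := by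
  have hle := (infDist_eq_dist_iff_real_inner_le_zero C.convex hz).mp h
  have h0 := hle 0 (zero_mem C)
  have h2 := hle (2 • z) (C.smul_mem zero_le_two hz)
  rw [two_smul, add_sub_cancel_right] at h2
  rw [zero_sub, inner_neg_right] at h0
  refine ⟨by linarith, fun w hw => ?_⟩
  simpa [inner_sub_right, inner_add_right] using hle (w + z) (add_mem hw hz)

theorem infDist_lt_dist_of_real_inner_pos (hK : Convex ℝ K) (hz : z ∈ K) {a : E} (ha : a ∈ K)
    (hpos : 0 < ⟪v - z, a - z⟫) : infDist v K < dist v z :=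
  (infDist_le_dist_of_mem hz).lt_of_ne fun h =>
    hpos.not_ge ((infDist_eq_dist_iff_real_inner_le_zero hK hz).mp h a ha)

end Nearest

section Orthogonal

variable {E ι : Type*} [NormedAddCommGroup E] [InnerProductSpace ℝ E] {u : E} {s : Set E}

theorem inner_eq_zero_of_mem_span (hs : ∀ y ∈ s, ⟪u, y⟫ = 0) {w : E}
    (hw : w ∈ Submodule.span ℝ s) : ⟪u, w⟫ = 0 := by
  rw [← Submodule.mem_orthogonal_singleton_iff_inner_right]
  exact Submodule.span_le.mpr
    (fun y hy => Submodule.mem_orthogonal_singleton_iff_inner_right.mpr (hs y hy)) hw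

theorem Finset.card_lt_finrank_of_linearIndepOn_of_inner_eq_zero [FiniteDimensional ℝ E]
    (hu : u ≠ 0) {x : ι → E} {T : Finset ι} (hT : LinearIndepOn ℝ x T)
    (horth : ∀ i ∈ T, ⟪u, x i⟫ = 0) : T.card < finrank ℝ E := by
  have hspan : Submodule.span ℝ (Set.range fun i : (T : Set ι) => x i) ≤ (ℝ ∙ u)ᗮ := by
    rw [Submodule.span_le]
    rintro _ ⟨i, rfl⟩
    exact Submodule.mem_orthogonal_singleton_iff_inner_right.mpr (horth i i.2)
  have hcard := Submodule.finrank_mono hspan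
  rw [finrank_span_eq_card hT] at hcard
  simp only [Finset.coe_sort_coe, Fintype.card_coe] at hcard
  have := (ℝ ∙ u).finrank_add_finrank_orthogonal
  rw [finrank_span_singleton hu] at this
  omega

end Orthogonal

section Colourful

variable {E ι : Type*} [NormedAddCommGroup E] [InnerProductSpace ℝ E] [FiniteDimensional ℝ E]
  [Fintype ι]

theorem exists_colourful_hull_infDist_lt [DecidableEq ι] (hdim : finrank ℝ E ≤ Fintype.card ι)
    {S : ι → Set E} {v z : E} (hvS : ∀ i, v ∈ hull ℝ (S i)) {x : ι → E} (hxS : ∀ i, x i ∈ S i)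
    {T : Finset ι} (hT : LinearIndepOn ℝ x T) (hz : z ∈ hull ℝ (x '' T))
    (hzv : z ≠ v) (hzmin : infDist v (hull ℝ (x '' T) : Set E) = dist v z) :
    ∃ x' : ι → E, (∀ i, x' i ∈ S i) ∧ ∃ T' : Finset ι, LinearIndepOn ℝ x' T' ∧
      infDist v (hull ℝ (x' '' T') : Set E) < dist v z := by
  set u := v - z
  have hu : u ≠ 0 := sub_ne_zero.mpr hzv.symm
  obtain ⟨huz, huC⟩ := inner_eq_zero_and_le_zero_of_infDist_eq hz hzmin
  set T₀ := T.filter fun i => ⟪u, x i⟫ = 0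
  have hzT₀ : z ∈ hull ℝ (x '' T₀) := by
    have hface := mem_hull_inter_ker_of_nonpos (φ := innerₗ E u)
      (fun y hy => huC y (subset_hull hy)) hz huz
    refine Submodule.span_mono ?_ hface
    rintro _ ⟨⟨i, hi, rfl⟩, hker⟩
    exact ⟨i, Finset.mem_filter.mpr ⟨hi, hker⟩, rfl⟩
  have hT₀ : LinearIndepOn ℝ x T₀ := hT.mono (Finset.coe_subset.mpr (Finset.filter_subset _ _))
  have hcard := T₀.card_lt_finrank_of_linearIndepOn_of_inner_eq_zero hu hT₀
    fun i hi => (Finset.mem_filter.mp hi).2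
  obtain ⟨i₀, -, hi₀⟩ := Finset.exists_mem_notMem_of_card_lt_card (t := Finset.univ)
    (hcard.trans_le (hdim.trans Finset.card_univ.ge))
  have huv : 0 < ⟪u, v⟫ := by
    rw [show v = u + z by simp [u], inner_add_right, huz, add_zero]
    exact real_inner_self_pos.mpr hu
  obtain ⟨a, haS, hua⟩ : ∃ a ∈ S i₀, 0 < ⟪u, a⟫ := by
    by_contra! h
    exact huv.not_ge (map_nonpos_of_mem_hull (φ := innerₗ E u) h (hvS i₀))
  set x' := Function.update x i₀ a
  have hxx' : EqOn x' x T₀ := fun i hi => Function.update_of_ne (ne_of_mem_of_not_mem hi hi₀) _ _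
  have hz' : z ∈ hull ℝ (x' '' ↑(insert i₀ T₀)) := by
    refine Submodule.span_mono ?_ hzT₀
    rw [← hxx'.image_eq, Finset.coe_insert]
    exact image_mono (subset_insert _ _)
  have ha' : a ∈ hull ℝ (x' '' ↑(insert i₀ T₀)) :=
    subset_hull ⟨i₀, Finset.mem_insert_self _ _, Function.update_self _ _ _⟩
  refine ⟨x', (Function.forall_update_iff x (p := fun i y => y ∈ S i)).mpr
    ⟨haS, fun i _ => hxS i⟩, insert i₀ T₀, ?_, ?_⟩
  · rw [Finset.coe_insert, linearIndepOn_insert (by simpa using hi₀), hxx'.image_eq]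
    refine ⟨(linearIndepOn_congr hxx').mpr hT₀, fun ha => hua.ne' ?_⟩
    refine inner_eq_zero_of_mem_span ?_ (by simpa [x'] using ha)
    rintro _ ⟨i, hi, rfl⟩
    exact (Finset.mem_filter.mp hi).2
  · refine infDist_lt_dist_of_real_inner_pos (hull ℝ _).convex hz' ha' ?_
    rwa [inner_sub_right, huz, sub_zero]

theorem exists_colourful_mem_hull_of_finite (hdim : finrank ℝ E ≤ Fintype.card ι)
    {S : ι → Set E} (hS : ∀ i, (S i).Finite) {v : E} (hv : v ≠ 0)
    (hvS : ∀ i, v ∈ hull ℝ (S i)) : ∃ x : ι → E, (∀ i, x i ∈ S i) ∧ v ∈ hull ℝ (range x) := by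
  classical
  have hSne : ∀ i, (S i).Nonempty := fun i =>
    nonempty_iff_ne_empty.mpr fun h => hv (by simpa [h] using hvS i)
  set cands : Set ((ι → E) × Finset ι) := {p | p.1 ∈ univ.pi S ∧ LinearIndepOn ℝ p.1 p.2}
  have hfin : cands.Finite :=
    ((Set.Finite.pi hS).prod finite_univ).subset fun p hp => ⟨hp.1, trivial⟩
  have hne : cands.Nonempty :=
    ⟨(fun i => (hSne i).some, ∅), fun i _ => (hSne i).some_mem, by simp⟩
  obtain ⟨⟨x, T⟩, ⟨hxS, hT⟩, hmin⟩ :=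
    cands.exists_min_image (fun p => infDist v (hull ℝ (p.1 '' p.2) : Set E)) hfin hne
  have hclosed : IsClosed (hull ℝ (x '' T) : Set E) := by
    rw [image_eq_range]
    exact isClosed_hull_range hT
  obtain ⟨z, hz, hzmin⟩ := hclosed.exists_infDist_eq_dist ⟨0, zero_mem _⟩ v
  obtain rfl | hzv := eq_or_ne z v
  · exact ⟨x, fun i => hxS i trivial, Submodule.span_mono (image_subset_range _ _) hz⟩
  obtain ⟨x', hx'S, T', hT', hlt⟩ :=
    exists_colourful_hull_infDist_lt hdim hvS (fun i => hxS i trivial) hT hz hzv hzmin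
  exact ((hmin (x', T') ⟨fun i _ => hx'S i, hT'⟩).not_gt (hzmin ▸ hlt)).elim

theorem exists_colourful_mem_hull (hdim : finrank ℝ E ≤ Fintype.card ι) {A : ι → Set E} {v : E}
    (hv : v ≠ 0) (hvA : ∀ i, v ∈ hull ℝ (A i)) :
    ∃ x : ι → E, (∀ i, x i ∈ A i) ∧ v ∈ hull ℝ (range x) := by
  choose S hSA hvS using fun i => Submodule.mem_span_finite_of_mem_span (hvA i)
  obtain ⟨x, hxS, hvx⟩ :=
    exists_colourful_mem_hull_of_finite hdim (fun i => (S i).finite_toSet) hv hvS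
  exact ⟨x, fun i => hSA i (hxS i), hvx⟩

end Colourful

theorem posHull_eq_hull {d : ℕ} (A : Set (EuclideanSpace ℝ (Fin d))) :
    posHull A = hull ℝ A := by
  ext y
  rw [SetLike.mem_coe, Submodule.mem_span_set']
  constructor
  · rintro ⟨n, c, f, hc, hf, rfl⟩
    exact ⟨n, fun i => ⟨c i, hc i⟩, fun i => ⟨f i, hf i⟩, rfl⟩
  · rintro ⟨n, c, f, rfl⟩
    exact ⟨n, fun i => c i, fun i => f i, fun i => (c i).2, fun i => (f i).2, rfl⟩

theorem colourful_caratheodory_cone (d : ℕ) (A : Fin d → Set (EuclideanSpace ℝ (Fin d)))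
    (v : EuclideanSpace ℝ (Fin d)) (hv : v ≠ 0) (hvA : ∀ i, v ∈ posHull (A i)) :
    ∃ x : Fin d → EuclideanSpace ℝ (Fin d),
      (∀ i, x i ∈ A i) ∧ v ∈ posHull (Set.range x) := by
  simp only [posHull_eq_hull, SetLike.mem_coe] at hvA ⊢
  exact exists_colourful_mem_hull (by simp) hv hvA
end

section
/- Let F = {f₁, …, f_{d+1}} ⊆ ℝ^d be the vertex set of a simplex with the origin in its interior (so pos F = ℝ^d and F is affinely independent). Set X₁ = … = X_d = F and X_{d+1} = … = X_{2d} = −F. Then pos X_i = ℝ^d for every i, yet no choice of points x_i ∈ X_i over a proper subset I ⊊ {1,…,2d} satisfies pos {x_i : i ∈ I} = ℝ^d. -/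
open scoped BigOperators

/-- `B` is a positive basis of the set `L` (typically a linear subspace). -/
def IsPosBasisOf {d : ℕ} (B L : Set (EuclideanSpace ℝ (Fin d))) : Prop :=
  posHull B = L ∧ ∀ b ∈ B, posHull (B \ {b}) ≠ L

/-!
Let `λ` be the barycentric coordinates of `0` in the simplex `f`; they are all positive. For
`a ≠ c` the affine function `λ c • coord a - λ a • coord c` vanishes at `0`, so it is a linear
functional; it is `≤ 0` at every `f j` with `j ≠ a` and at every `-f j` with `j ≠ c`, but positive
at `f a`. Hence these `2d` vectors do not positively span. A choice over a proper subset of the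
`2d` colours uses at most `2d - 1` vectors, at most `d` of each sign, so some `f a` and some `-f c`
with `a ≠ c` are both unused. Each `pos X i` is everything because `0` is interior to `conv X i`.
-/

open Finset

theorem Finset.exists_notMem_notMem_ne_of_card_add_card {α : Type*} [Fintype α] [DecidableEq α]
    (s t : Finset α) (hs : #s < Fintype.card α) (ht : #t < Fintype.card α)
    (hst : #s + #t + 3 ≤ 2 * Fintype.card α) : ∃ a ∉ s, ∃ c ∉ t, a ≠ c := by
  by_contra! h
  obtain ⟨a, -, has⟩ := exists_mem_notMem_of_card_lt_card (s := s) (t := univ) (by rwa [card_univ])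
  obtain ⟨c, -, hct⟩ := exists_mem_notMem_of_card_lt_card (s := t) (t := univ) (by rwa [card_univ])
  have hs1 : #sᶜ ≤ 1 := card_le_one.mpr fun x hx y hy =>
    (h x (mem_compl.mp hx) c hct).trans (h y (mem_compl.mp hy) c hct).symm
  have ht1 : #tᶜ ≤ 1 := card_le_one.mpr fun x hx y hy =>
    (h a has x (mem_compl.mp hx)).symm.trans (h a has y (mem_compl.mp hy))
  rw [card_compl] at hs1 ht1
  omega

theorem Fin.card_filter_val_lt_le {n : ℕ} (I : Finset (Fin n)) (m : ℕ) :
    #(I.filter fun i : Fin n => (i : ℕ) < m) ≤ m :=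
  (card_le_card (filter_subset_filter _ (subset_univ I))).trans
    (card_filter_val_lt.trans_le (min_le_right n m))

theorem Fin.card_filter_not_val_lt_le {n : ℕ} (I : Finset (Fin n)) (m : ℕ) :
    #(I.filter fun i : Fin n => ¬(i : ℕ) < m) ≤ n - m := by
  have := card_filter_add_card_filter_not (s := (univ : Finset (Fin n))) (fun i => (i : ℕ) < m)
  rw [card_filter_val_lt, card_univ, Fintype.card_fin] at this
  have := card_le_card (filter_subset_filter (fun i : Fin n => ¬(i : ℕ) < m) (subset_univ I))
  omega

theorem zero_mem_interior_convexHull_neg {E : Type*} [AddCommGroup E] [Module ℝ E]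
    [TopologicalSpace E] [IsTopologicalAddGroup E] {A : Set E}
    (h : (0 : E) ∈ interior (convexHull ℝ A)) : (0 : E) ∈ interior (convexHull ℝ (-A)) := by
  rw [convexHull_neg]
  change (0 : E) ∈ interior (Homeomorph.neg E ⁻¹' _)
  rw [← Homeomorph.preimage_interior]
  simpa using h

variable {d : ℕ} {A B : Set (EuclideanSpace ℝ (Fin d))}

theorem subset_posHull : A ⊆ posHull A := fun a ha =>
  ⟨1, fun _ => 1, fun _ => a, fun _ => zero_le_one, fun _ => ha, by simp⟩

theorem posHull_mono (h : A ⊆ B) : posHull A ⊆ posHull B := by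
  rintro x ⟨n, c, g, hc, hg, rfl⟩
  exact ⟨n, c, g, hc, fun i => h (hg i), rfl⟩

theorem smul_mem_posHull {x : EuclideanSpace ℝ (Fin d)} (hx : x ∈ posHull A) {r : ℝ}
    (hr : 0 ≤ r) : r • x ∈ posHull A := by
  obtain ⟨n, c, g, hc, hg, rfl⟩ := hx
  refine ⟨n, fun i => r * c i, g, fun i => mul_nonneg hr (hc i), hg, ?_⟩
  simp only [smul_sum, smul_smul]

theorem convex_posHull (A : Set (EuclideanSpace ℝ (Fin d))) : Convex ℝ (posHull A) := by
  rintro x ⟨n, c, g, hc, hg, rfl⟩ y ⟨m, c', g', hc', hg', rfl⟩ p q hp hq -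
  refine ⟨n + m, Fin.append (fun i => p * c i) (fun i => q * c' i), Fin.append g g', ?_, ?_, ?_⟩
  · exact Fin.addCases (fun i => by simpa using mul_nonneg hp (hc i))
      (fun i => by simpa using mul_nonneg hq (hc' i))
  · exact Fin.addCases (fun i => by simpa using hg i) (fun i => by simpa using hg' i)
  · simp only [Fin.sum_univ_add, Fin.append_left, Fin.append_right, mul_smul, smul_sum]

theorem convexHull_subset_posHull (A : Set (EuclideanSpace ℝ (Fin d))) :
    convexHull ℝ A ⊆ posHull A :=
  convexHull_min subset_posHull (convex_posHull A)

theorem posHull_eq_univ_of_zero_mem_interior_convexHull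
    (h : (0 : EuclideanSpace ℝ (Fin d)) ∈ interior (convexHull ℝ A)) : posHull A = Set.univ := by
  refine Set.eq_univ_of_forall fun x => ?_
  have hcont : Filter.Tendsto (fun t : ℝ => t • x) (nhds 0) (nhds 0) :=
    (by fun_prop : Continuous fun t : ℝ => t • x).tendsto' 0 0 (zero_smul ℝ x)
  obtain ⟨t, ht, ht0⟩ := ((eventually_nhdsWithin_of_eventually_nhds (hcont.eventually
    (isOpen_interior.mem_nhds h))).and (self_mem_nhdsWithin (s := Set.Ioi (0 : ℝ)))).exists
  have := smul_mem_posHull (convexHull_subset_posHull A (interior_subset ht))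
    (inv_nonneg.mpr (le_of_lt ht0))
  rwa [smul_smul, inv_mul_cancel₀ (ne_of_gt ht0), one_smul] at this

theorem posHull_subset_setOf_nonpos (φ : EuclideanSpace ℝ (Fin d) →ₗ[ℝ] ℝ)
    (hA : ∀ a ∈ A, φ a ≤ 0) : posHull A ⊆ {x | φ x ≤ 0} := by
  rintro x ⟨n, c, g, hc, hg, rfl⟩
  simp only [Set.mem_ofPred_eq, map_sum, map_smul, smul_eq_mul]
  exact sum_nonpos fun i _ => mul_nonpos_of_nonneg_of_nonpos (hc i) (hA _ (hg i))

theorem AffineBasis.apply_notMem_posHull_image_compl_union_neg {ι : Type*}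
    (b : AffineBasis ι ℝ (EuclideanSpace ℝ (Fin d))) {a c : ι} (hac : a ≠ c)
    (ha : 0 < b.coord a 0) (hc : 0 < b.coord c 0) :
    b a ∉ posHull (b '' {a}ᶜ ∪ -(b '' {c}ᶜ)) := by
  classical
  set φ := b.coord c 0 • b.coord a - b.coord a 0 • b.coord c
  have hφ0 : φ 0 = 0 := by
    simp only [φ, AffineMap.coe_sub, AffineMap.coe_smul, Pi.sub_apply, Pi.smul_apply, smul_eq_mul]
    ring
  have hφlin : ∀ v, φ.linear v = φ v := fun v => by
    simpa [hφ0] using φ.linearMap_vsub v 0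
  have hφb : ∀ j, φ (b j) =
      (if a = j then b.coord c 0 else 0) - (if c = j then b.coord a 0 else 0) := by
    intro j
    simp only [φ, AffineMap.coe_sub, AffineMap.coe_smul, Pi.sub_apply, Pi.smul_apply, smul_eq_mul,
      b.coord_apply]
    split_ifs <;> ring
  intro hmem
  have hle := posHull_subset_setOf_nonpos φ.linear ?_ hmem
  · simp only [Set.mem_ofPred_eq, hφlin, hφb, ↓reduceIte, if_neg hac.symm, sub_zero] at hle
    linarith
  rintro g (⟨j, hj, rfl⟩ | hg)
  · rw [hφlin, hφb, if_neg (Ne.symm hj)]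
    split_ifs <;> linarith
  · obtain ⟨j, hj, hjg⟩ := Set.mem_neg.mp hg
    rw [← neg_neg g, ← hjg, map_neg, hφlin, hφb, if_neg (Ne.symm hj)]
    split_ifs <;> linarith

theorem exists_ne_image_subset_image_compl_union_neg {E : Type*} [InvolutiveNeg E] {d : ℕ}
    {f : Fin (d + 1) → E} (hf : Function.Injective f) {I : Finset (Fin (2 * d))}
    (hI : I ≠ univ) {x : Fin (2 * d) → E}
    (hx : ∀ i ∈ I, x i ∈ if (i : ℕ) < d then Set.range f else -Set.range f) :
    ∃ a c, a ≠ c ∧ x '' I ⊆ f '' {a}ᶜ ∪ -(f '' {c}ᶜ) := by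
  classical
  set I₁ := I.filter fun i : Fin (2 * d) => (i : ℕ) < d
  set I₂ := I.filter fun i : Fin (2 * d) => ¬(i : ℕ) < d
  set V₁ := univ.filter fun j => f j ∈ I₁.image x
  set V₂ := univ.filter fun j => -f j ∈ I₂.image x
  have hV₁ : #V₁ ≤ #I₁ := (card_le_card_of_injOn f (fun j hj => (mem_filter.mp hj).2)
    hf.injOn).trans card_image_le
  have hV₂ : #V₂ ≤ #I₂ := (card_le_card_of_injOn (-f ·) (fun j hj => (mem_filter.mp hj).2)
    (neg_injective.comp hf).injOn).trans card_image_le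
  have hI₁ : #I₁ ≤ d := Fin.card_filter_val_lt_le I d
  have hI₂ : #I₂ ≤ 2 * d - d := Fin.card_filter_not_val_lt_le I d
  have hI₁₂ : #I₁ + #I₂ = #I := card_filter_add_card_filter_not _
  have hIcard := (card_lt_iff_ne_univ I).mpr hI
  rw [Fintype.card_fin] at hIcard
  obtain ⟨a, ha, c, hc, hac⟩ := exists_notMem_notMem_ne_of_card_add_card V₁ V₂
    (by simp only [Fintype.card_fin]; omega) (by simp only [Fintype.card_fin]; omega)
    (by simp only [Fintype.card_fin]; omega)
  refine ⟨a, c, hac, ?_⟩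
  rintro _ ⟨i, hi, rfl⟩
  have hxi := hx i hi
  split_ifs at hxi with hlt
  · obtain ⟨j, hj⟩ := hxi
    refine Or.inl ⟨j, fun hja => ha ?_, hj⟩
    subst hja
    simp only [V₁, I₁, mem_filter, mem_univ, mem_image, true_and]
    exact ⟨i, ⟨hi, hlt⟩, hj.symm⟩
  · obtain ⟨j, hj⟩ := Set.mem_neg.mp hxi
    refine Or.inr (Set.mem_neg.mpr ⟨j, fun hjc => hc ?_, hj⟩)
    subst hjc
    simp only [V₂, I₂, mem_filter, mem_univ, mem_image, true_and]
    exact ⟨i, ⟨hi, hlt⟩, by rw [hj, neg_neg]⟩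

theorem pcase_sharp (d : ℕ) (f : Fin (d + 1) → EuclideanSpace ℝ (Fin d))
    (haff : AffineIndependent ℝ f)
    (hint : (0 : EuclideanSpace ℝ (Fin d)) ∈ interior (convexHull ℝ (Set.range f)))
    (X : Fin (2 * d) → Set (EuclideanSpace ℝ (Fin d)))
    (hXdef : ∀ i : Fin (2 * d),
      X i = if (i : ℕ) < d then Set.range f else -(Set.range f)) :
    (∀ i, posHull (X i) = Set.univ) ∧
    ∀ I : Finset (Fin (2 * d)), I ≠ Finset.univ →
      ∀ x : Fin (2 * d) → EuclideanSpace ℝ (Fin d),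
        (∀ i ∈ I, x i ∈ X i) → posHull (x '' ↑I) ≠ Set.univ := by
  refine ⟨fun i => ?_, fun I hI x hx => ?_⟩
  · rw [hXdef i]
    split_ifs
    · exact posHull_eq_univ_of_zero_mem_interior_convexHull hint
    · exact posHull_eq_univ_of_zero_mem_interior_convexHull
        (zero_mem_interior_convexHull_neg hint)
  let b : AffineBasis (Fin (d + 1)) ℝ (EuclideanSpace ℝ (Fin d)) :=
    ⟨f, haff, haff.affineSpan_eq_top_iff_card_eq_finrank_add_one.mpr (by simp)⟩
  have hcoord : ∀ j, 0 < b.coord j 0 := by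
    rw [show Set.range f = Set.range b from rfl, b.interior_convexHull] at hint
    exact hint
  obtain ⟨a, c, hac, hsub⟩ :=
    exists_ne_image_subset_image_compl_union_neg haff.injective hI fun i hi => hXdef i ▸ hx i hi
  exact fun h => b.apply_notMem_posHull_image_compl_union_neg hac (hcoord a) (hcoord c)
    (posHull_mono hsub (h ▸ Set.mem_univ _))
end

section
/- In the Positive Basis Case (X₁ = … = X_d = F and X_{d+1} = … = X_{2d} = −F, where F is the vertex set of a d-simplex with 0 in its interior), the number of transversals (x₁,…,x_{2d}), x_i ∈ X_i, with pos {x₁,…,x_{2d}} = ℝ^d equals (d+1)!·d!. -/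
/-!
Let `μ i > 0` be the barycentric coordinates of the origin with respect to the simplex
`f 0, …, f d`. A transversal is described by two index maps `p q : Fin d → Fin (d + 1)`: its points
are the `f (p k)` and the `-f (q k)`. Put `S = range p` and `T = range q`; both miss an index.
If `S = T = {c}ᶜ`, the points form a symmetric set spanning the space, since `f c` is a combination
of the other vertices; so their positive hull is everything. Otherwise there are `u ∉ T` and
`w ∉ S` with `u ≠ w`, and the functional `μ w • ℓ u - μ u • ℓ w`, where `ℓ i` is the linear part
of the `i`-th barycentric coordinate, takes the value `μ w [i = u] - μ u [i = w]` at `f i`: it is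
nonnegative at every point of the transversal but not zero. Hence the good transversals are given
by the missing index `c` and two bijections `Fin d ≃ {c}ᶜ`, i.e. an injection
`Fin d ↪ Fin (d + 1)` and a permutation of `Fin d`: `(d + 1)! * d!` of them.
-/

open scoped BigOperators

open Set Function

section PosHull

variable {d : ℕ} {A : Set (EuclideanSpace ℝ (Fin d))}

lemma posHull_eq_hull_s12 : posHull A = PointedCone.hull ℝ A := by
  ext x
  simp only [SetLike.mem_coe, Submodule.mem_span_set']
  constructor
  · rintro ⟨n, c, v, hc, hv, rfl⟩
    exact ⟨n, fun i => ⟨c i, hc i⟩, fun i => ⟨v i, hv i⟩, rfl⟩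
  · rintro ⟨n, c, v, rfl⟩
    exact ⟨n, fun i => c i, fun i => v i, fun i => (c i).2, fun i => (v i).2, rfl⟩

lemma posHull_union_neg_eq_univ (hA : Submodule.span ℝ A = ⊤) : posHull (A ∪ -A) = univ := by
  have : Submodule.span ℝ A ≤ (PointedCone.hull ℝ (A ∪ -A)).lineal :=
    Submodule.span_le.mpr fun a ha =>
      ⟨PointedCone.subset_hull (Or.inl ha), PointedCone.subset_hull (Or.inr (neg_mem_neg.mpr ha))⟩
  rw [hA] at this
  rw [posHull_eq_hull_s12, eq_univ_iff_forall]
  exact fun x => PointedCone.lineal_le _ (this Submodule.mem_top)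

lemma LinearMap.eq_zero_of_nonneg_of_posHull_eq_univ
    (φ : EuclideanSpace ℝ (Fin d) →ₗ[ℝ] ℝ) (hφ : ∀ a ∈ A, 0 ≤ φ a) (hA : posHull A = univ) :
    φ = 0 := by
  have hle : PointedCone.hull ℝ A ≤ (PointedCone.positive ℝ ℝ).comap φ :=
    Submodule.span_le.mpr hφ
  have hnonneg (x) : 0 ≤ φ x :=
    hle (by rw [← SetLike.mem_coe, ← posHull_eq_hull_s12, hA]; trivial)
  ext x
  simpa using le_antisymm (by simpa using hnonneg (-x)) (hnonneg x)

end PosHull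

namespace AffineBasis

variable {ι E : Type*} [AddCommGroup E] [Module ℝ E] (b : AffineBasis ι ℝ E)

lemma linear_coord_apply [DecidableEq ι] (i j : ι) :
    (b.coord i).linear (b j) = (if i = j then 1 else 0) - b.coord i 0 := by
  simpa [b.coord_apply] using (b.coord i).linearMap_vsub (b j) 0

lemma span_image_compl_singleton_eq_top [Fintype ι] {c : ι} (hc : b.coord c 0 ≠ 0) :
    Submodule.span ℝ (b '' {c}ᶜ) = ⊤ := by
  classical
  have hmem (i : ι) : b i ∈ Submodule.span ℝ (b '' {c}ᶜ) := by
    rcases eq_or_ne i c with rfl | hi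
    · have hrel := b.linear_combination_coord_eq_self 0
      rw [← Finset.add_sum_erase _ _ (Finset.mem_univ i)] at hrel
      refine (Submodule.smul_mem_iff _ hc).mp ?_
      rw [eq_neg_of_add_eq_zero_left hrel]
      exact neg_mem (Submodule.sum_mem _ fun j hj =>
        Submodule.smul_mem _ _ (Submodule.subset_span ⟨j, Finset.ne_of_mem_erase hj, rfl⟩))
    · exact Submodule.subset_span ⟨i, hi, rfl⟩
  refine eq_top_iff.mpr fun v _ => ?_
  rw [← b.linear_combination_coord_eq_self v]
  exact Submodule.sum_mem _ fun i _ => Submodule.smul_mem _ _ (hmem i)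

end AffineBasis

lemma exists_eq_compl_singleton_of_forall_eq {ι : Type*} {S T : Set ι} (hS : Sᶜ.Nonempty)
    (hT : Tᶜ.Nonempty) (h : ∀ u ∉ T, ∀ w ∉ S, u = w) : ∃ c, S = {c}ᶜ ∧ T = {c}ᶜ := by
  obtain ⟨w, hw⟩ := hS
  obtain ⟨u, hu⟩ := hT
  obtain rfl := h u hu w hw
  refine ⟨u, ext fun i => ⟨fun hi hiu => hw (hiu ▸ hi), fun hiu => ?_⟩,
    ext fun i => ⟨fun hi hiu => hu (hiu ▸ hi), fun hiu => ?_⟩⟩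
  · by_contra hi
    exact hiu (h u hu i hi).symm
  · by_contra hi
    exact hiu (h i hi u hw)

section Simplex

variable {d : ℕ} {ι : Type*} (b : AffineBasis ι ℝ (EuclideanSpace ℝ (Fin d)))

lemma posHull_image_union_neg_image_ne_univ (hb : ∀ i, 0 < b.coord i 0) {S T : Set ι}
    {u w : ι} (hu : u ∉ T) (hw : w ∉ S) (huw : u ≠ w) :
    posHull (b '' S ∪ -(b '' T)) ≠ univ := by
  classical
  set φ := b.coord w 0 • (b.coord u).linear - b.coord u 0 • (b.coord w).linear
  have hφ (i : ι) : φ (b i) =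
      b.coord w 0 * (if u = i then 1 else 0) - b.coord u 0 * (if w = i then 1 else 0) := by
    simp only [φ, LinearMap.sub_apply, LinearMap.smul_apply, b.linear_coord_apply, smul_eq_mul]
    ring
  intro hA
  have hφ0 : φ = 0 := by
    refine φ.eq_zero_of_nonneg_of_posHull_eq_univ ?_ hA
    rintro a (⟨i, hi, rfl⟩ | ha)
    · have hwi : w ≠ i := fun h => hw (h ▸ hi)
      rw [hφ, if_neg hwi]
      have := (hb w).le
      split_ifs <;> simp [this]
    · obtain ⟨i, hi, hia⟩ := ha
      have hui : u ≠ i := fun h => hu (h ▸ hi)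
      rw [← neg_neg a, ← hia, map_neg, hφ, if_neg hui]
      have := (hb u).le
      split_ifs <;> simp [this]
  have := hφ u
  rw [hφ0, if_pos rfl, if_neg huw.symm, LinearMap.zero_apply] at this
  linarith [hb w]

lemma posHull_image_union_neg_image_eq_univ_iff [Fintype ι] (hb : ∀ i, 0 < b.coord i 0)
    {S T : Set ι} (hS : Sᶜ.Nonempty) (hT : Tᶜ.Nonempty) :
    posHull (b '' S ∪ -(b '' T)) = univ ↔ ∃ c, S = {c}ᶜ ∧ T = {c}ᶜ := by
  refine ⟨fun hA => exists_eq_compl_singleton_of_forall_eq hS hT fun u hu w hw => ?_, ?_⟩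
  · by_contra huw
    exact posHull_image_union_neg_image_ne_univ b hb hu hw huw hA
  · rintro ⟨c, rfl, rfl⟩
    exact posHull_union_neg_eq_univ (b.span_image_compl_singleton_eq_top (hb c).ne')

end Simplex

lemma ncard_setOf_forall_mem_ite_eq {E : Type*} (d : ℕ) (F G : Set E) (P : Set E → Prop)
    (X : Fin (2 * d) → Set E) (hX : ∀ i : Fin (2 * d), X i = if (i : ℕ) < d then F else G) :
    {x : Fin (2 * d) → E | (∀ i, x i ∈ X i) ∧ P (range x)}.ncard
      = {ab : (Fin d → E) × (Fin d → E) |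
          (∀ k, ab.1 k ∈ F) ∧ (∀ k, ab.2 k ∈ G) ∧ P (range ab.1 ∪ range ab.2)}.ncard := by
  let σ : Fin d ⊕ Fin d ≃ Fin (2 * d) := finSumFinEquiv.trans (finCongr (two_mul d).symm)
  let e : (Fin (2 * d) → E) ≃ (Fin d → E) × (Fin d → E) :=
    (σ.arrowCongr (Equiv.refl E)).symm.trans (Equiv.sumArrowEquivProdArrow _ _ _)
  have : {x : Fin (2 * d) → E | (∀ i, x i ∈ X i) ∧ P (range x)} = e ⁻¹' {ab |
          (∀ k, ab.1 k ∈ F) ∧ (∀ k, ab.2 k ∈ G) ∧ P (range ab.1 ∪ range ab.2)} := by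
    ext x
    have hrange : range x = range (x ∘ σ ∘ Sum.inl) ∪ range (x ∘ σ ∘ Sum.inr) := by
      rw [← Sum.elim_range, ← Sum.comp_elim, Sum.elim_comp_inl_inr, EquivLike.range_comp]
    have hmem : (∀ i, x i ∈ X i) ↔
        (∀ k, x (σ (Sum.inl k)) ∈ F) ∧ ∀ k, x (σ (Sum.inr k)) ∈ G := by
      simp [σ, ← σ.forall_congr_right, Sum.forall, hX]
    have he : e x = (x ∘ σ ∘ Sum.inl, x ∘ σ ∘ Sum.inr) := rfl
    simp only [mem_ofPred_eq, mem_preimage, he, hmem, hrange, and_assoc, comp_apply]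
  rw [this, ncard_preimage_of_injective_subset_range e.injective (by simp)]

lemma ncard_setOf_mem_range_mem_neg_range {α ι E : Type*} [InvolutiveNeg E] {f : ι → E}
    (hf : Injective f) (P : Set E → Prop) :
    {ab : (α → E) × (α → E) |
        (∀ k, ab.1 k ∈ range f) ∧ (∀ k, ab.2 k ∈ -range f) ∧ P (range ab.1 ∪ range ab.2)}.ncard
      = {pq : (α → ι) × (α → ι) | P (f '' range pq.1 ∪ -(f '' range pq.2))}.ncard := by
  let Φ : (α → ι) × (α → ι) → (α → E) × (α → E) := fun pq => (f ∘ pq.1, fun k => -f (pq.2 k))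
  have hΦ : Injective Φ := by
    rintro ⟨p, q⟩ ⟨p', q'⟩ h
    simp only [Φ, Prod.mk.injEq, funext_iff, comp_apply, neg_inj, hf.eq_iff] at h
    exact Prod.ext (funext h.1) (funext h.2)
  have hrange (pq : (α → ι) × (α → ι)) :
      range (Φ pq).1 ∪ range (Φ pq).2 = f '' range pq.1 ∪ -(f '' range pq.2) := by
    simp only [Φ, range_comp, range_comp' (fun v : E => -v), image_neg_eq_neg, range_comp' f]
  have : {ab : (α → E) × (α → E) |
        (∀ k, ab.1 k ∈ range f) ∧ (∀ k, ab.2 k ∈ -range f) ∧ P (range ab.1 ∪ range ab.2)}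
      = Φ '' {pq | P (f '' range pq.1 ∪ -(f '' range pq.2))} := by
    ext ⟨a, b⟩
    constructor
    · rintro ⟨ha, hb, hP⟩
      choose p hp using ha
      choose q hq using hb
      have hΦpq : Φ (p, q) = (a, b) := by
        simp only [Φ, Prod.mk.injEq]
        exact ⟨funext hp, funext fun k => by simp [hq k]⟩
      exact ⟨(p, q), by rwa [mem_ofPred_eq, ← hrange, hΦpq], hΦpq⟩
    · rintro ⟨pq, hP, hΦpq⟩
      rw [← hΦpq]
      refine ⟨fun k => mem_range_self _, fun k => ?_, by rwa [hrange]⟩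
      simp [Φ]
  rw [this, ncard_image_of_injective _ hΦ]

section Count

variable {α β : Type*} [Finite α] [Finite β]

lemma exists_range_eq_compl_singleton_iff_injective (h : Nat.card β = Nat.card α + 1)
    {p : α → β} : (∃ c, range p = {c}ᶜ) ↔ Injective p := by
  have hcompl := ncard_add_ncard_compl (range p)
  have : (∃ c, range p = {c}ᶜ) ↔ (range p)ᶜ.ncard = 1 := by
    simp only [ncard_eq_one, eq_compl_comm (x := range p), eq_comm (a := ({_} : Set β))]
  rw [this, ← injOn_univ, ← ncard_image_iff, image_univ, ncard_univ]
  omega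

lemma ncard_setOf_range_eq_compl_singleton (h : Nat.card β = Nat.card α + 1) :
    {pq : (α → β) × (α → β) | ∃ c, range pq.1 = {c}ᶜ ∧ range pq.2 = {c}ᶜ}.ncard
      = (Nat.card β).factorial * (Nat.card α).factorial := by
  have := Fintype.ofFinite α
  have := Fintype.ofFinite β
  let toPair : (α ↪ β) × Equiv.Perm α → (α → β) × (α → β) := fun eσ => (eσ.1, eσ.1 ∘ eσ.2)
  have htoPair : Injective toPair := by
    rintro ⟨e, σ⟩ ⟨e', σ'⟩ heq
    obtain ⟨he, hσ⟩ := Prod.ext_iff.mp heq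
    obtain rfl : e = e' := DFunLike.coe_injective he
    exact Prod.ext rfl (Equiv.coe_fn_injective (e.injective.comp_left hσ))
  have hrange : {pq : (α → β) × (α → β) | ∃ c, range pq.1 = {c}ᶜ ∧ range pq.2 = {c}ᶜ}
      = range toPair := by
    ext ⟨p, q⟩
    constructor
    · rintro ⟨c, hp, hq⟩
      have hpinj := (exists_range_eq_compl_singleton_iff_injective h).mp ⟨c, hp⟩
      have hqinj := (exists_range_eq_compl_singleton_iff_injective h).mp ⟨c, hq⟩
      refine ⟨(⟨p, hpinj⟩, (Equiv.ofInjective q hqinj).trans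
        ((Equiv.setCongr (hq.trans hp.symm)).trans (Equiv.ofInjective p hpinj).symm)), ?_⟩
      ext i <;> simp [toPair, Equiv.apply_ofInjective_symm]
    · rintro ⟨⟨e, σ⟩, hpq⟩
      obtain ⟨c, hc⟩ := (exists_range_eq_compl_singleton_iff_injective h).mpr e.injective
      obtain ⟨rfl, rfl⟩ := Prod.ext_iff.mp hpq
      exact ⟨c, hc, by simpa [toPair] using hc⟩
  rw [hrange, ← image_univ, ncard_image_of_injective _ htoPair, ncard_univ, Nat.card_prod,
    Nat.card_perm, Nat.card_eq_fintype_card (α := α ↪ β), Fintype.card_embedding_eq,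
    ← Nat.card_eq_fintype_card, ← Nat.card_eq_fintype_card, h]
  congr 1
  simpa [Nat.descFactorial_self, Nat.factorial_succ] using
    Nat.succ_descFactorial (Nat.card α) (Nat.card α)

end Count

theorem pcase_count (d : ℕ) (f : Fin (d + 1) → EuclideanSpace ℝ (Fin d))
    (haff : AffineIndependent ℝ f)
    (hint : (0 : EuclideanSpace ℝ (Fin d)) ∈ interior (convexHull ℝ (Set.range f)))
    (X : Fin (2 * d) → Set (EuclideanSpace ℝ (Fin d)))
    (hXdef : ∀ i : Fin (2 * d),
      X i = if (i : ℕ) < d then Set.range f else -(Set.range f)) :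
    {x : Fin (2 * d) → EuclideanSpace ℝ (Fin d) |
        (∀ i, x i ∈ X i) ∧ posHull (Set.range x) = Set.univ}.ncard
      = (d + 1).factorial * d.factorial := by
  let b : AffineBasis (Fin (d + 1)) ℝ (EuclideanSpace ℝ (Fin d)) :=
    ⟨f, haff, affineSpan_eq_top_of_nonempty_interior ⟨0, hint⟩⟩
  have hb : ∀ i, 0 < b.coord i 0 := by
    have h : (0 : EuclideanSpace ℝ (Fin d)) ∈ interior (convexHull ℝ (range b)) := hint
    rwa [b.interior_convexHull] at h
  have hcompl (p : Fin d → Fin (d + 1)) : (range p)ᶜ.Nonempty := by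
    refine nonempty_compl.mpr fun h => ?_
    simpa using Fintype.card_le_of_surjective p (range_eq_univ.mp h)
  have hgood : {pq : (Fin d → Fin (d + 1)) × (Fin d → Fin (d + 1)) |
      posHull (f '' range pq.1 ∪ -(f '' range pq.2)) = univ}
      = {pq | ∃ c, range pq.1 = {c}ᶜ ∧ range pq.2 = {c}ᶜ} :=
    ext fun pq => posHull_image_union_neg_image_eq_univ_iff b hb (hcompl _) (hcompl _)
  rw [ncard_setOf_forall_mem_ite_eq d _ _ (fun s => posHull s = univ) X hXdef,
    ncard_setOf_mem_range_mem_neg_range haff.injective (fun s => posHull s = univ), hgood,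
    ncard_setOf_range_eq_compl_singleton (by simp)]
  simp
end
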